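/- arXiv:1906.06736 — 4 statements merged into one kernel-verified Lean document; each statement's English description precedes it below -/
import Mathlib

section
/- For probability distributions F₁,...,F_k and G₁,...,G_k on ℝ, the Lévy distance between the convolutions satisfies ρ(F₁ * ⋯ * F_k, G₁ * ⋯ * G_k) ≤ Σ_{j=1}^k ρ(F_j, G_j). -/
open MeasureTheory Set

/-- The Lévy distance between two distribution functions on `ℝ`. -/
noncomputable def levyDist (F G : ℝ → ℝ) : ℝ :=
  sInf {ε : ℝ | 0 < ε ∧ ∀ x : ℝ, F (x - ε) - ε ≤ G x ∧ G x ≤ F (x + ε) + ε}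

/-- The cumulative distribution function of a measure on `ℝ`. -/
noncomputable def cdf (μ : Measure ℝ) : ℝ → ℝ := fun x => (μ (Iic x)).toReal

/-- The Lévy distance between two probability measures on `ℝ`. -/
noncomputable def levyDistM (μ ν : Measure ℝ) : ℝ := levyDist (cdf μ) (cdf ν)

/-- The convolution `F 0 ∗ F 1 ∗ ⋯ ∗ F (k-1)` of a finite family of measures on `ℝ`
(with the empty convolution being `δ₀`). -/
noncomputable def convSeq (F : ℕ → Measure ℝ) : ℕ → Measure ℝ
  | 0 => Measure.dirac 0
  | n + 1 => (convSeq F n).conv (F n)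

/-! An `ε > 0` is admissible for `(F, G)` when `F x ≤ G (x + ε) + ε` and `G x ≤ F (x + ε) + ε`
for all `x`, and the Lévy distance is the infimum of admissible `ε`. The distribution function of
`μ ∗ κ` at `x` is the `κ`-average of `t ↦ F_μ (x - t)`, so admissibility survives convolution with
a common probability measure and `ρ(μ ∗ κ, ν ∗ κ) ≤ ρ(μ, ν)`. Admissible `ε`s add along a chain,
which gives the triangle inequality, and the theorem follows by induction, passing from
`F₁ ∗ ⋯ ∗ F_{n+1}` to `G₁ ∗ ⋯ ∗ G_{n+1}` through `G₁ ∗ ⋯ ∗ G_n ∗ F_{n+1}`. -/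

open scoped Pointwise

section LevyDist

variable {F G H : ℝ → ℝ} {ε : ℝ}

def levySet (F G : ℝ → ℝ) : Set ℝ :=
  {ε : ℝ | 0 < ε ∧ ∀ x : ℝ, F (x - ε) - ε ≤ G x ∧ G x ≤ F (x + ε) + ε}

lemma levyDist_eq_sInf_levySet (F G : ℝ → ℝ) : levyDist F G = sInf (levySet F G) := rfl

lemma bddBelow_levySet (F G : ℝ → ℝ) : BddBelow (levySet F G) :=
  ⟨0, fun _ hε => hε.1.le⟩

lemma mem_levySet_iff :
    ε ∈ levySet F G ↔
      0 < ε ∧ (∀ x, F x ≤ G (x + ε) + ε) ∧ ∀ x, G x ≤ F (x + ε) + ε := by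
  refine and_congr_right fun _ => ⟨fun h => ⟨fun x => ?_, fun x => (h x).2⟩,
    fun h x => ⟨?_, h.2 x⟩⟩
  · have := (h (x + ε)).1
    rw [add_sub_cancel_right] at this
    linarith
  · have := h.1 (x - ε)
    rw [sub_add_cancel] at this
    linarith

lemma one_mem_levySet (hF : ∀ x, F x ∈ Icc (0 : ℝ) 1) (hG : ∀ x, G x ∈ Icc (0 : ℝ) 1) :
    (1 : ℝ) ∈ levySet F G := by
  refine ⟨one_pos, fun x => ⟨?_, ?_⟩⟩
  · linarith [(hF (x - 1)).2, (hG x).1]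
  · linarith [(hG x).2, (hF (x + 1)).1]

lemma levySet_self_of_monotone (hF : Monotone F) : levySet F F = Ioi 0 := by
  ext ε
  refine ⟨And.left, fun (hε : 0 < ε) => ⟨hε, fun x => ⟨?_, ?_⟩⟩⟩
  · linarith [hF (sub_le_self x hε.le)]
  · linarith [hF (le_add_of_nonneg_right (a := x) hε.le)]

lemma levyDist_self_of_monotone (hF : Monotone F) : levyDist F F = 0 := by
  rw [levyDist_eq_sInf_levySet, levySet_self_of_monotone hF, csInf_Ioi]

lemma add_mem_levySet {ε₁ ε₂ : ℝ} (h₁ : ε₁ ∈ levySet F H) (h₂ : ε₂ ∈ levySet H G) :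
    ε₁ + ε₂ ∈ levySet F G := by
  rw [mem_levySet_iff] at h₁ h₂ ⊢
  obtain ⟨h₁pos, h₁FH, h₁HF⟩ := h₁
  obtain ⟨h₂pos, h₂HG, h₂GH⟩ := h₂
  refine ⟨add_pos h₁pos h₂pos, fun x => ?_, fun x => ?_⟩
  · have := h₂HG (x + ε₁)
    rw [add_assoc] at this
    linarith [h₁FH x]
  · have := h₁HF (x + ε₂)
    rw [add_assoc, add_comm ε₂] at this
    linarith [h₂GH x]

lemma levyDist_triangle (hFH : (levySet F H).Nonempty) (hHG : (levySet H G).Nonempty) :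
    levyDist F G ≤ levyDist F H + levyDist H G := by
  rw [levyDist_eq_sInf_levySet, levyDist_eq_sInf_levySet, levyDist_eq_sInf_levySet,
    ← csInf_add hFH (bddBelow_levySet F H) hHG (bddBelow_levySet H G)]
  refine csInf_le_csInf (bddBelow_levySet F G) (hFH.add hHG) ?_
  rintro _ ⟨ε₁, h₁, ε₂, h₂, rfl⟩
  exact add_mem_levySet h₁ h₂

end LevyDist

section Cdf

variable (μ ν : Measure ℝ)

lemma cdf_mem_Icc [IsProbabilityMeasure μ] (x : ℝ) : cdf μ x ∈ Icc (0 : ℝ) 1 :=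
  ⟨ENNReal.toReal_nonneg, ENNReal.toReal_le_of_le_ofReal zero_le_one (by simp [prob_le_one])⟩

lemma monotone_cdf [IsFiniteMeasure μ] : Monotone (cdf μ) := fun _ _ hxy =>
  ENNReal.toReal_mono (measure_ne_top μ _) (measure_mono (Iic_subset_Iic.2 hxy))

lemma conv_Iic [SFinite μ] [SFinite ν] (x : ℝ) :
    μ.conv ν (Iic x) = ∫⁻ t, μ (Iic (x - t)) ∂ν := by
  rw [Measure.conv_comm, Measure.conv, Measure.map_apply (by fun_prop) measurableSet_Iic,
    Measure.prod_apply (measurable_add measurableSet_Iic)]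
  congr 1 with t
  congr 1 with s
  simp [le_sub_iff_add_le']

lemma cdf_conv [IsFiniteMeasure μ] [SFinite ν] (x : ℝ) :
    cdf (μ.conv ν) x = ∫ t, cdf μ (x - t) ∂ν := by
  rw [cdf, conv_Iic]
  refine (integral_toReal ?_ (ae_of_all _ fun _ => measure_lt_top μ _)).symm
  refine (Antitone.measurable fun s t hst => measure_mono (Iic_subset_Iic.2 ?_)).aemeasurable
  linarith

lemma integrable_cdf_sub [IsFiniteMeasure μ] [IsFiniteMeasure ν] (x : ℝ) :
    Integrable (fun t => cdf μ (x - t)) ν := by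
  have hanti : Antitone fun t => cdf μ (x - t) :=
    (monotone_cdf μ).comp_antitone fun s t hst => by linarith
  refine .of_bound hanti.measurable.aestronglyMeasurable (μ univ).toReal (ae_of_all _ fun t => ?_)
  rw [Real.norm_of_nonneg (by exact ENNReal.toReal_nonneg)]
  exact ENNReal.toReal_mono (measure_ne_top μ _) (measure_mono (subset_univ _))

lemma cdf_conv_le_of_le (κ : Measure ℝ) [IsFiniteMeasure μ] [IsFiniteMeasure ν]
    [IsProbabilityMeasure κ] {ε : ℝ} (h : ∀ x, cdf μ x ≤ cdf ν (x + ε) + ε) (x : ℝ) :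
    cdf (μ.conv κ) x ≤ cdf (ν.conv κ) (x + ε) + ε := by
  rw [cdf_conv, cdf_conv]
  calc ∫ t, cdf μ (x - t) ∂κ ≤ ∫ t, (cdf ν (x + ε - t) + ε) ∂κ :=
        integral_mono (integrable_cdf_sub μ κ x)
          ((integrable_cdf_sub ν κ _).add (integrable_const ε))
          fun t => by simpa only [sub_add_eq_add_sub] using h (x - t)
    _ = ∫ t, cdf ν (x + ε - t) ∂κ + ε := by
        rw [integral_add (integrable_cdf_sub ν κ _) (integrable_const ε), integral_const,
          probReal_univ, one_smul]

end Cdf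

section LevyDistM

variable (μ ν κ : Measure ℝ)

lemma levySet_cdf_nonempty [IsProbabilityMeasure μ] [IsProbabilityMeasure ν] :
    (levySet (cdf μ) (cdf ν)).Nonempty :=
  ⟨1, one_mem_levySet (cdf_mem_Icc μ) (cdf_mem_Icc ν)⟩

lemma levySet_cdf_subset_conv_right [IsFiniteMeasure μ] [IsFiniteMeasure ν]
    [IsProbabilityMeasure κ] :
    levySet (cdf μ) (cdf ν) ⊆ levySet (cdf (μ.conv κ)) (cdf (ν.conv κ)) := by
  intro ε hε
  rw [mem_levySet_iff] at hε ⊢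
  obtain ⟨hpos, hμν, hνμ⟩ := hε
  exact ⟨hpos, cdf_conv_le_of_le μ ν κ hμν, cdf_conv_le_of_le ν μ κ hνμ⟩

lemma levyDistM_self [IsFiniteMeasure μ] : levyDistM μ μ = 0 :=
  levyDist_self_of_monotone (monotone_cdf μ)

variable [IsProbabilityMeasure μ] [IsProbabilityMeasure ν] [IsProbabilityMeasure κ]

lemma levyDistM_triangle : levyDistM μ ν ≤ levyDistM μ κ + levyDistM κ ν :=
  levyDist_triangle (levySet_cdf_nonempty μ κ) (levySet_cdf_nonempty κ ν)

lemma levyDistM_conv_right_le : levyDistM (μ.conv κ) (ν.conv κ) ≤ levyDistM μ ν :=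
  csInf_le_csInf (bddBelow_levySet _ _) (levySet_cdf_nonempty μ ν)
    (levySet_cdf_subset_conv_right μ ν κ)

lemma levyDistM_conv_left_le : levyDistM (κ.conv μ) (κ.conv ν) ≤ levyDistM μ ν := by
  rw [Measure.conv_comm κ μ, Measure.conv_comm κ ν]
  exact levyDistM_conv_right_le μ ν κ

end LevyDistM

instance isProbabilityMeasure_convSeq (F : ℕ → Measure ℝ) [∀ j, IsProbabilityMeasure (F j)]
    (k : ℕ) : IsProbabilityMeasure (convSeq F k) := by
  induction k with
  | zero => rw [convSeq]; infer_instance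
  | succ n ih => rw [convSeq]; infer_instance

/-- Subadditivity of the Lévy metric under convolution:
`ρ(F₁ ∗ ⋯ ∗ F_k, G₁ ∗ ⋯ ∗ G_k) ≤ ∑_{j=1}^k ρ(F_j, G_j)`. -/
theorem levyDist_conv_le (F G : ℕ → Measure ℝ)
    (hF : ∀ j, IsProbabilityMeasure (F j)) (hG : ∀ j, IsProbabilityMeasure (G j))
    (k : ℕ) :
    levyDistM (convSeq F k) (convSeq G k) ≤ ∑ j ∈ Finset.range k, levyDistM (F j) (G j) := by
  induction k with
  | zero => simp [convSeq, levyDistM_self]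
  | succ n ih =>
    rw [Finset.sum_range_succ]
    calc levyDistM (convSeq F (n + 1)) (convSeq G (n + 1))
        ≤ levyDistM ((convSeq F n).conv (F n)) ((convSeq G n).conv (F n)) +
            levyDistM ((convSeq G n).conv (F n)) ((convSeq G n).conv (G n)) :=
          levyDistM_triangle _ _ _
      _ ≤ levyDistM (convSeq F n) (convSeq G n) + levyDistM (F n) (G n) :=
          add_le_add (levyDistM_conv_right_le _ _ _) (levyDistM_conv_left_le _ _ _)
      _ ≤ _ := by gcongr
end

section
/- Let μ = Σ_{j=0}^n a_j δ_j be a probability distribution on {0,...,n} with a_n > 0 whose characteristic function has no zeros. Then there exist a drift γ ∈ {0,1,...,n} and a finite signed measure ν on ℤ \ {0} such that the characteristic function of μ equals exp(iθγ + ∫_ℝ (e^{iθx} − 1) dν(x)) for all θ ∈ ℝ; moreover γ equals the number of roots (with multiplicity) of the polynomial w ↦ Σ_{j=0}^n a_j w^j lying strictly inside the unit circle. -/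
/-!
Over `ℂ` the generating polynomial factors as `P(w) = c ∏ (w - z)` over its roots, none of which
lies on the unit circle. For `|w| = 1`, a root `z` inside the circle gives
`w - z = w (1 - z / w)` and one outside gives `w - z = -z (1 - w / z)`; expanding the logarithms
as power series turns each factor into `w` (resp. `-z`) times the exponential of a Laurent series
in `w`. Dividing by `P(1) = 1` removes the constants, every inside root contributes one factor `w`
to the drift, and the Laurent coefficients are real because the roots of a real polynomial are
closed under conjugation.
-/

open Complex Polynomial

/-- The `m`-th Laurent coefficient of `log (1 - z / w)` if `‖z‖ < 1`, resp. of `log (1 - w / z)` if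
`1 < ‖z‖`, on the circle `‖w‖ = 1`. -/
noncomputable def rootLevyCoeff (z : ℂ) (m : ℤ) : ℂ :=
  if (‖z‖ < 1 ∧ m < 0) ∨ (1 < ‖z‖ ∧ 0 < m) then -z ^ (-m) / m.natAbs else 0

@[simp]
lemma rootLevyCoeff_zero (z : ℂ) : rootLevyCoeff z 0 = 0 := by
  simp [rootLevyCoeff]

lemma rootLevyCoeff_neg_succ {z : ℂ} (hz : ‖z‖ < 1) (k : ℕ) :
    rootLevyCoeff z (-(k + 1)) = -z ^ (k + 1) / (k + 1) := by
  have hk : (-((k : ℤ) + 1)).natAbs = k + 1 := by omega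
  rw [rootLevyCoeff, if_pos (.inl ⟨hz, by omega⟩), hk, neg_neg]
  norm_cast

lemma rootLevyCoeff_of_nonneg {z : ℂ} (hz : ‖z‖ < 1) {m : ℤ} (hm : 0 ≤ m) :
    rootLevyCoeff z m = 0 :=
  if_neg (by rintro (⟨-, h⟩ | ⟨h, -⟩) <;> linarith)

lemma rootLevyCoeff_succ {z : ℂ} (hz : 1 < ‖z‖) (k : ℕ) :
    rootLevyCoeff z (k + 1) = -z⁻¹ ^ (k + 1) / (k + 1) := by
  have hk : ((k : ℤ) + 1).natAbs = k + 1 := by omega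
  rw [rootLevyCoeff, if_pos (.inr ⟨hz, by omega⟩), hk, zpow_neg, ← inv_zpow]
  norm_cast

lemma rootLevyCoeff_of_nonpos {z : ℂ} (hz : 1 < ‖z‖) {m : ℤ} (hm : m ≤ 0) :
    rootLevyCoeff z m = 0 :=
  if_neg (by rintro (⟨h, -⟩ | ⟨-, h⟩) <;> linarith)

lemma hasSum_rootLevyCoeff_mul_zpow_of_norm_lt_one {z w : ℂ} (hz : ‖z‖ < 1) (hw : ‖w‖ = 1) :
    HasSum (fun m : ℤ => rootLevyCoeff z m * w ^ m) (log (1 - z * w⁻¹)) := by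
  have hzw : ‖z * w⁻¹‖ < 1 := by simpa [hw] using hz
  have hneg : HasSum (fun k : ℕ => rootLevyCoeff z (-(k + 1)) * w ^ (-((k : ℤ) + 1)))
      (log (1 - z * w⁻¹)) := by
    refine (neg_neg (log (1 - z * w⁻¹)) ▸ (hasSum_taylorSeries_neg_log' hzw).neg).congr_fun
      fun k => ?_
    rw [rootLevyCoeff_neg_succ hz, zpow_neg, ← inv_zpow]
    norm_cast
    ring
  have hnonneg : HasSum (fun k : ℕ => rootLevyCoeff z k * w ^ (k : ℤ)) 0 :=
    hasSum_zero.congr_fun fun k => by rw [rootLevyCoeff_of_nonneg hz k.cast_nonneg, zero_mul]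
  simpa using HasSum.of_nat_of_neg_add_one (f := fun m : ℤ => rootLevyCoeff z m * w ^ m)
    hnonneg hneg

lemma hasSum_rootLevyCoeff_mul_zpow_of_one_lt_norm {z w : ℂ} (hz : 1 < ‖z‖) (hw : ‖w‖ = 1) :
    HasSum (fun m : ℤ => rootLevyCoeff z m * w ^ m) (log (1 - z⁻¹ * w)) := by
  have hzw : ‖z⁻¹ * w‖ < 1 := by simpa [hw] using inv_lt_one_of_one_lt₀ hz
  have hpos : HasSum (fun k : ℕ => rootLevyCoeff z k * w ^ (k : ℤ)) (log (1 - z⁻¹ * w)) := by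
    rw [← hasSum_nat_add_iff' 1, Finset.sum_range_one, Nat.cast_zero, rootLevyCoeff_zero,
      zero_mul, sub_zero]
    refine (neg_neg (log (1 - z⁻¹ * w)) ▸ (hasSum_taylorSeries_neg_log' hzw).neg).congr_fun
      fun k => ?_
    push_cast
    rw [rootLevyCoeff_succ hz]
    norm_cast
    ring
  have hneg : HasSum (fun k : ℕ => rootLevyCoeff z (-(k + 1)) * w ^ (-((k : ℤ) + 1))) 0 :=
    hasSum_zero.congr_fun fun k => by rw [rootLevyCoeff_of_nonpos hz (by omega), zero_mul]
  simpa using HasSum.of_nat_of_neg_add_one (f := fun m : ℤ => rootLevyCoeff z m * w ^ m)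
    hpos hneg

lemma summable_rootLevyCoeff_mul_zpow {z w : ℂ} (hz : ‖z‖ ≠ 1) (hw : ‖w‖ = 1) :
    Summable (fun m : ℤ => rootLevyCoeff z m * w ^ m) := by
  rcases hz.lt_or_gt with hz | hz
  · exact (hasSum_rootLevyCoeff_mul_zpow_of_norm_lt_one hz hw).summable
  · exact (hasSum_rootLevyCoeff_mul_zpow_of_one_lt_norm hz hw).summable

lemma one_sub_ne_zero_of_norm_lt_one {u : ℂ} (hu : ‖u‖ < 1) : 1 - u ≠ 0 :=
  sub_ne_zero.2 fun h => by simp [← h] at hu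

lemma mul_exp_tsum_rootLevyCoeff_mul_zpow {z w : ℂ} (hz : ‖z‖ ≠ 1) (hw : ‖w‖ = 1) :
    (if ‖z‖ < 1 then w else -z) * exp (∑' m : ℤ, rootLevyCoeff z m * w ^ m) = w - z := by
  have hw0 : w ≠ 0 := norm_ne_zero_iff.1 (by simp [hw])
  rcases hz.lt_or_gt with hz | hz
  · have hu : ‖z * w⁻¹‖ < 1 := by simpa [hw] using hz
    rw [if_pos hz, (hasSum_rootLevyCoeff_mul_zpow_of_norm_lt_one hz hw).tsum_eq,
      exp_log (one_sub_ne_zero_of_norm_lt_one hu)]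
    field_simp
  · have hz0 : z ≠ 0 := norm_ne_zero_iff.1 (by linarith)
    have hu : ‖z⁻¹ * w‖ < 1 := by simpa [hw] using inv_lt_one_of_one_lt₀ hz
    rw [if_neg hz.not_gt, (hasSum_rootLevyCoeff_mul_zpow_of_one_lt_norm hz hw).tsum_eq,
      exp_log (one_sub_ne_zero_of_norm_lt_one hu)]
    field_simp
    ring

lemma sub_eq_one_sub_mul_exp_tsum {z w : ℂ} (hz : ‖z‖ ≠ 1) (hw : ‖w‖ = 1) :
    w - z = (1 - z) * (if ‖z‖ < 1 then w else 1) *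
      exp (∑' m : ℤ, (w ^ m - 1) * rootLevyCoeff z m) := by
  have hw' := mul_exp_tsum_rootLevyCoeff_mul_zpow hz hw
  have h1 := mul_exp_tsum_rootLevyCoeff_mul_zpow hz norm_one
  simp only [one_zpow, mul_one] at h1
  have hsplit : ∑' m : ℤ, (w ^ m - 1) * rootLevyCoeff z m =
      ∑' m : ℤ, rootLevyCoeff z m * w ^ m - ∑' m : ℤ, rootLevyCoeff z m := by
    rw [← (summable_rootLevyCoeff_mul_zpow hz hw).tsum_sub
      (by simpa using summable_rootLevyCoeff_mul_zpow hz norm_one)]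
    exact tsum_congr fun m => by ring
  rw [hsplit, exp_sub, ← hw', ← h1]
  have := exp_ne_zero (∑' m : ℤ, rootLevyCoeff z m)
  split_ifs <;> field_simp

noncomputable def levyCoeff (s : Multiset ℂ) (m : ℤ) : ℂ :=
  (s.map (rootLevyCoeff · m)).sum

@[simp]
lemma levyCoeff_zero (s : Multiset ℂ) : levyCoeff s 0 = 0 := by
  simp [levyCoeff]

lemma levyCoeff_cons (z : ℂ) (s : Multiset ℂ) (m : ℤ) :
    levyCoeff (z ::ₘ s) m = rootLevyCoeff z m + levyCoeff s m := by
  simp [levyCoeff]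

lemma summable_levyCoeff_mul_zpow {s : Multiset ℂ} (hs : ∀ z ∈ s, ‖z‖ ≠ 1) {w : ℂ}
    (hw : ‖w‖ = 1) : Summable (fun m : ℤ => levyCoeff s m * w ^ m) := by
  induction s using Multiset.induction with
  | empty => simp [levyCoeff, summable_zero]
  | cons z s ih =>
    simp only [levyCoeff_cons, add_mul]
    exact (summable_rootLevyCoeff_mul_zpow (hs z (s.mem_cons_self z)) hw).add
      (ih fun y hy => hs y (Multiset.mem_cons_of_mem hy))

lemma Summable.zpow_sub_one_mul {f : ℤ → ℂ} {w : ℂ} (hw : Summable fun m => f m * w ^ m)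
    (h1 : Summable f) : Summable fun m => (w ^ m - 1) * f m :=
  (hw.sub h1).congr fun m => by ring

lemma prod_map_sub_eq_mul_exp_tsum {s : Multiset ℂ} (hs : ∀ z ∈ s, ‖z‖ ≠ 1) {w : ℂ}
    (hw : ‖w‖ = 1) :
    (s.map (w - ·)).prod = (s.map (1 - ·)).prod * w ^ (s.filter (‖·‖ < 1)).card *
      exp (∑' m : ℤ, (w ^ m - 1) * levyCoeff s m) := by
  induction s using Multiset.induction with
  | empty => simp [levyCoeff]
  | cons z s ih =>
    have hz := hs z (s.mem_cons_self z)
    have hs' : ∀ y ∈ s, ‖y‖ ≠ 1 := fun y hy => hs y (Multiset.mem_cons_of_mem hy)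
    have hsum : ∑' m : ℤ, (w ^ m - 1) * levyCoeff (z ::ₘ s) m =
        ∑' m : ℤ, (w ^ m - 1) * rootLevyCoeff z m + ∑' m : ℤ, (w ^ m - 1) * levyCoeff s m := by
      simp only [levyCoeff_cons, mul_add]
      refine Summable.tsum_add ?_ ?_
      · exact (summable_rootLevyCoeff_mul_zpow hz hw).zpow_sub_one_mul
          (by simpa using summable_rootLevyCoeff_mul_zpow hz norm_one)
      · exact (summable_levyCoeff_mul_zpow hs' hw).zpow_sub_one_mul
          (by simpa using summable_levyCoeff_mul_zpow hs' norm_one)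
    rw [Multiset.map_cons, Multiset.prod_cons, ih hs', sub_eq_one_sub_mul_exp_tsum hz hw, hsum,
      exp_add, Multiset.map_cons, Multiset.prod_cons]
    by_cases hz1 : ‖z‖ < 1
    · rw [if_pos hz1, Multiset.filter_cons_of_pos (p := (‖·‖ < 1)) s hz1, Multiset.card_cons,
        pow_succ]
      ring
    · rw [if_neg hz1, Multiset.filter_cons_of_neg (p := (‖·‖ < 1)) s hz1]
      ring

lemma rootLevyCoeff_conj (z : ℂ) (m : ℤ) :
    rootLevyCoeff (starRingEnd ℂ z) m = starRingEnd ℂ (rootLevyCoeff z m) := by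
  unfold rootLevyCoeff
  split_ifs <;> simp_all

lemma levyCoeff_map_conj (s : Multiset ℂ) (m : ℤ) :
    levyCoeff (s.map (starRingEnd ℂ)) m = starRingEnd ℂ (levyCoeff s m) := by
  simp [levyCoeff, map_multiset_sum, Multiset.map_map, rootLevyCoeff_conj]

lemma Polynomial.ofReal_re_levyCoeff_roots {P : ℂ[X]} (hP : P.map (starRingEnd ℂ) = P)
    (m : ℤ) : ((levyCoeff P.roots m).re : ℂ) = levyCoeff P.roots m := by
  have hconj : P.roots.map (starRingEnd ℂ) = P.roots := by
    rw [← (IsAlgClosed.splits P).roots_map, hP]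
  rw [← conj_eq_iff_re, ← levyCoeff_map_conj, hconj]

lemma Polynomial.norm_ne_one_of_mem_roots {P : ℂ[X]} (hP : ∀ θ : ℝ, P.eval (exp (θ * I)) ≠ 0)
    {z : ℂ} (hz : z ∈ P.roots) : ‖z‖ ≠ 1 := by
  intro hz1
  apply hP z.arg
  rw [← (mem_roots'.1 hz).2]
  congr
  simpa [hz1] using norm_mul_exp_arg_mul_I z

lemma Polynomial.eval_exp_mul_I_eq_eval_one_mul_exp {P : ℂ[X]} (hP : ∀ z ∈ P.roots, ‖z‖ ≠ 1)
    (θ : ℝ) :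
    P.eval (exp (θ * I)) = P.eval 1 * exp (I * θ * (P.roots.filter (‖·‖ < 1)).card +
      ∑' m : ℤ, (exp (θ * m * I) - 1) * levyCoeff P.roots m) := by
  have heval (w : ℂ) : P.eval w = P.leadingCoeff * (P.roots.map (w - ·)).prod := by
    conv_lhs =>
      rw [← C_leadingCoeff_mul_prod_multiset_X_sub_C (IsAlgClosed.card_roots_eq_natDegree (p := P))]
    simp [eval_multiset_prod, Multiset.map_map]
  have hzpow (m : ℤ) : exp (θ * m * I) = exp (θ * I) ^ m := by
    rw [← exp_int_mul]; ring_nf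
  rw [heval, heval, prod_map_sub_eq_mul_exp_tsum hP (norm_exp_ofReal_mul_I θ),
    prod_map_sub_eq_mul_exp_tsum hP norm_one]
  simp only [hzpow, one_pow, one_zpow, sub_self, zero_mul, tsum_zero, exp_zero, mul_one, exp_add,
    ← exp_nat_mul]
  ring_nf

theorem qid_representation_finite_lattice_general (n : ℕ) (a : Fin (n + 1) → ℝ)
    (hsum : ∑ j, a j = 1)
    (hnozero : ∀ θ : ℝ, ∑ j, (a j : ℂ) * Complex.exp (θ * (j : ℕ) * Complex.I) ≠ 0) :
    ∃ (γ : ℕ) (ν : ℤ → ℝ),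
      γ ≤ n ∧
      -- `ν` is a finite signed measure on `ℤ ∖ {0}`
      ν 0 = 0 ∧ Summable (fun m : ℤ => |ν m|) ∧
      -- Lévy–Khintchine type representation of the characteristic function
      (∀ θ : ℝ,
        ∑ j, (a j : ℂ) * Complex.exp (θ * (j : ℕ) * Complex.I) =
          Complex.exp (Complex.I * θ * γ +
            ∑' m : ℤ, (Complex.exp (θ * (m : ℤ) * Complex.I) - 1) * ν m)) ∧
      -- the drift is the number of roots strictly inside the unit circle
      γ = Multiset.card
            (@Multiset.filter ℂ (fun z : ℂ => ‖z‖ < 1) (Classical.decPred _)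
              (∑ j : Fin (n + 1), Polynomial.C (a j : ℂ) * Polynomial.X ^ (j : ℕ)).roots) := by
  set P : ℂ[X] := ∑ j : Fin (n + 1), C (a j : ℂ) * X ^ (j : ℕ) with hP
  have hcharP (θ : ℝ) : ∑ j, (a j : ℂ) * exp (θ * (j : ℕ) * I) = P.eval (exp (θ * I)) := by
    simp only [hP, eval_finsetSum, eval_mul, eval_C, eval_pow, eval_X, ← exp_nat_mul]
    exact Finset.sum_congr rfl fun j _ => by ring_nf
  have hP1 : P.eval 1 = 1 := by
    simpa [hP, eval_finsetSum] using congrArg ((↑) : ℝ → ℂ) hsum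
  have hroots : ∀ z ∈ P.roots, ‖z‖ ≠ 1 := fun z =>
    norm_ne_one_of_mem_roots fun θ => hcharP θ ▸ hnozero θ
  have hreal := ofReal_re_levyCoeff_roots (P := P) (by simp [hP, Polynomial.map_sum])
  refine ⟨(P.roots.filter (‖·‖ < 1)).card, fun m => (levyCoeff P.roots m).re, ?_, by simp,
    ?_, fun θ => ?_, by congr⟩
  · refine (Multiset.card_le_card (Multiset.filter_le _ _)).trans ((card_roots' P).trans ?_)
    exact natDegree_sum_le_of_forall_le _ _ fun j _ =>
      (natDegree_C_mul_X_pow_le _ _).trans (Nat.lt_succ_iff.1 j.isLt)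
  · have hν : Summable (levyCoeff P.roots) := by
      simpa using summable_levyCoeff_mul_zpow hroots norm_one
    exact summable_abs_iff.2 (hasSum_re hν.hasSum).summable
  · simp only [hcharP, eval_exp_mul_I_eq_eval_one_mul_exp hroots, hP1, one_mul, hreal]

/-- A probability distribution `μ = ∑_{j=0}^n a_j δ_j` on `{0,…,n}` with `a_n > 0` whose
characteristic function has no zeros admits a Lévy–Khintchine type representation with a
drift `γ ∈ {0,…,n}` and a finite (real-valued) signed measure `ν` on `ℤ ∖ {0}`, where
moreover `γ` is the number of roots (with multiplicity) of `w ↦ ∑_j a_j w^j` strictly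
inside the unit circle. -/
theorem qid_representation_finite_lattice (n : ℕ) (a : Fin (n + 1) → ℝ)
    (ha : ∀ j, 0 ≤ a j) (hsum : ∑ j, a j = 1) (han : 0 < a (Fin.last n))
    (hnozero : ∀ θ : ℝ, ∑ j, (a j : ℂ) * Complex.exp (θ * (j : ℕ) * Complex.I) ≠ 0) :
    ∃ (γ : ℕ) (ν : ℤ → ℝ),
      γ ≤ n ∧
      -- `ν` is a finite signed measure on `ℤ ∖ {0}`
      ν 0 = 0 ∧ Summable (fun m : ℤ => |ν m|) ∧
      -- Lévy–Khintchine type representation of the characteristic function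
      (∀ θ : ℝ,
        ∑ j, (a j : ℂ) * Complex.exp (θ * (j : ℕ) * Complex.I) =
          Complex.exp (Complex.I * θ * γ +
            ∑' m : ℤ, (Complex.exp (θ * (m : ℤ) * Complex.I) - 1) * ν m)) ∧
      -- the drift is the number of roots strictly inside the unit circle
      γ = Multiset.card
            (@Multiset.filter ℂ (fun z : ℂ => ‖z‖ < 1) (Classical.decPred _)
              (∑ j : Fin (n + 1), Polynomial.C (a j : ℂ) * Polynomial.X ^ (j : ℕ)).roots) :=
  qid_representation_finite_lattice_general n a hsum hnozero
end

section
/- Let ξ₁,...,ξ_n be the roots (with multiplicity) of the polynomial f(w) = Σ_{j=0}^n a_j w^j with real coefficients a_0,...,a_{n-1} ≥ 0, a_n > 0, Σa_j = 1, and suppose no root lies on the unit circle. Then the signed measure ν = −Σ_{m≥1} m^{-1}(Σ_{j: |ξ_j|<1} ξ_j^m) δ_{−m} − Σ_{m≥1} m^{-1}(Σ_{j: |ξ_j|>1} ξ_j^{−m}) δ_m is a real-valued finite signed measure on ℤ \ {0}, and for all θ ∈ ℝ, f(e^{iθ}) = exp(iθγ + ∫(e^{iθx} − 1) dν(x)),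 where γ is the number of roots with modulus less than 1. -/
/-!
Since `f(1) = ∑ aⱼ = 1`, the factorization gives `f(e^{iθ}) = ∏ⱼ (e^{iθ} - ξⱼ) / (1 - ξⱼ)`.
For `|ξ| < 1` a factor equals `e^{iθ} (1 - ξ e^{-iθ}) / (1 - ξ)`, for `|ξ| > 1` it equals
`(1 - ξ⁻¹ e^{iθ}) / (1 - ξ⁻¹)`; expanding `-log (1 - x) = ∑ xᵐ / m` at the parameter of modulus
`< 1` writes the logarithm of each ratio as `∑ₘ (e^{iθm} - 1) ν_ξ(m)`, where `ν` is the sum of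
the one-root measures `ν_ξ`. The masses of `ν` are real because the roots of a real polynomial
are permuted by complex conjugation.
-/

open Complex

/-- The quasi-Lévy measure on `ℤ ∖ {0}` built from the roots `ξ₁,…,ξ_n` of the polynomial:
`ν(−m) = −m⁻¹ ∑_{j : |ξ_j|<1} ξ_j^m` and `ν(m) = −m⁻¹ ∑_{j : |ξ_j|>1} ξ_j^{−m}` for `m ≥ 1`,
and `ν(0) = 0` (a priori complex-valued). -/
noncomputable def quasiLevyOfRoots (n : ℕ) (ξ : Fin n → ℂ) : ℤ → ℂ := fun m =>
  if m = 0 then 0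
  else if m < 0 then
    -(((-m : ℤ) : ℂ))⁻¹ * ∑ j : Fin n, if ‖ξ j‖ < 1 then ξ j ^ (-m).toNat else 0
  else
    -(((m : ℤ) : ℂ))⁻¹ * ∑ j : Fin n, if 1 < ‖ξ j‖ then (ξ j)⁻¹ ^ m.toNat else 0

open Finset

theorem Multiset.eq_of_forall_prod_map_sub_eq {R : Type*} [CommRing R] [IsDomain R] [Infinite R]
    {s t : Multiset R} (h : ∀ w, (s.map (w - ·)).prod = (t.map (w - ·)).prod) : s = t := by
  have hpoly : (s.map fun a => Polynomial.X - Polynomial.C a).prod =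
      (t.map fun a => Polynomial.X - Polynomial.C a).prod :=
    Polynomial.funext fun w => by simpa [Polynomial.eval_multiset_prod] using h w
  simpa only [Polynomial.roots_multiset_prod_X_sub_C] using congrArg Polynomial.roots hpoly

theorem map_conj_eq_of_forall_sum_eq_mul_prod {ι : Type*} [Fintype ι] {n : ℕ}
    (a : Fin (n + 1) → ℝ) {c : ℝ} (hc : c ≠ 0) (ξ : ι → ℂ)
    (h : ∀ w : ℂ, ∑ j, (a j : ℂ) * w ^ (j : ℕ) = c * ∏ j, (w - ξ j)) :
    (univ.val.map ξ).map (starRingEnd ℂ) = univ.val.map ξ := by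
  refine Multiset.eq_of_forall_prod_map_sub_eq fun w => ?_
  have hw := congrArg (starRingEnd ℂ) (h (starRingEnd ℂ w))
  simp only [map_sum, map_mul, map_pow, map_prod, map_sub, conj_ofReal, conj_conj] at hw
  rw [h w] at hw
  simpa [Multiset.map_map, ← prod_eq_multiset_prod] using
    (mul_left_cancel₀ (ofReal_ne_zero.2 hc) hw).symm

noncomputable def quasiLevyOfRoot (z : ℂ) : ℤ → ℂ := fun m =>
  if m = 0 then 0
  else if m < 0 then -(((-m : ℤ) : ℂ))⁻¹ * if ‖z‖ < 1 then z ^ (-m).toNat else 0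
  else -(((m : ℤ) : ℂ))⁻¹ * if 1 < ‖z‖ then z⁻¹ ^ m.toNat else 0

theorem quasiLevyOfRoots_apply (n : ℕ) (ξ : Fin n → ℂ) (m : ℤ) :
    quasiLevyOfRoots n ξ m = ∑ j, quasiLevyOfRoot (ξ j) m := by
  unfold quasiLevyOfRoots quasiLevyOfRoot
  split_ifs <;> simp [mul_sum]

/-- At `k = 0` the right-hand side vanishes through `x / 0 = 0`. -/
theorem quasiLevyOfRoot_natCast (z : ℂ) (k : ℕ) :
    quasiLevyOfRoot z k = if 1 < ‖z‖ then -(z⁻¹ ^ k / k) else 0 := by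
  rcases k.eq_zero_or_pos with rfl | hk
  · simp [quasiLevyOfRoot]
  · simp [quasiLevyOfRoot, hk.ne', div_eq_inv_mul]

theorem quasiLevyOfRoot_neg_add_one (z : ℂ) (k : ℕ) :
    quasiLevyOfRoot z (-(k + 1)) = if ‖z‖ < 1 then -(z ^ (k + 1) / (k + 1)) else 0 := by
  have hneg : -(k + 1 : ℤ) < 0 := by omega
  have hk : (-(-(k + 1 : ℤ))).toNat = k + 1 := by omega
  rw [quasiLevyOfRoot, if_neg hneg.ne, if_pos hneg, hk]
  push_cast
  split_ifs <;> simp [div_eq_inv_mul]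

theorem quasiLevyOfRoot_conj (z : ℂ) (m : ℤ) :
    quasiLevyOfRoot (starRingEnd ℂ z) m = starRingEnd ℂ (quasiLevyOfRoot z m) := by
  simp only [quasiLevyOfRoot, norm_conj]
  split_ifs <;> simp

theorem summable_norm_pow_div {x : ℂ} (hx : ‖x‖ < 1) :
    Summable fun k : ℕ => ‖x ^ k / k‖ := by
  refine (summable_geometric_of_lt_one (norm_nonneg x) hx).of_nonneg_of_le
    (fun _ => norm_nonneg _) fun k => ?_
  rw [norm_div, norm_pow, norm_natCast]
  rcases k.eq_zero_or_pos with rfl | hk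
  · simp
  · exact div_le_self (by positivity) (by exact_mod_cast hk)

theorem summable_norm_quasiLevyOfRoot (z : ℂ) : Summable fun m => ‖quasiLevyOfRoot z m‖ := by
  refine Summable.of_nat_of_neg_add_one ?_ ?_
  · simp only [quasiLevyOfRoot_natCast]
    split_ifs with hz
    · simpa using summable_norm_pow_div (x := z⁻¹) (by simpa using inv_lt_one_of_one_lt₀ hz)
    · simp
  · simp only [quasiLevyOfRoot_neg_add_one]
    split_ifs with hz
    · simpa using (summable_nat_add_iff 1).2 (summable_norm_pow_div hz)
    · simp

theorem summable_norm_quasiLevyOfRoots (n : ℕ) (ξ : Fin n → ℂ) :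
    Summable fun m => ‖quasiLevyOfRoots n ξ m‖ :=
  (summable_sum fun j _ => summable_norm_quasiLevyOfRoot (ξ j)).of_nonneg_of_le
    (fun _ => norm_nonneg _) fun m => quasiLevyOfRoots_apply n ξ m ▸ norm_sum_le _ _

theorem conj_quasiLevyOfRoots {n : ℕ} {ξ : Fin n → ℂ}
    (hξ : (univ.val.map ξ).map (starRingEnd ℂ) = univ.val.map ξ) (m : ℤ) :
    starRingEnd ℂ (quasiLevyOfRoots n ξ m) = quasiLevyOfRoots n ξ m := by
  rw [quasiLevyOfRoots_apply, map_sum]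
  simp only [← quasiLevyOfRoot_conj]
  simpa only [Multiset.map_map, Function.comp_def, ← sum_eq_multiset_sum] using
    congrArg (fun s => (s.map (quasiLevyOfRoot · m)).sum) hξ

theorem exists_hasSum_pow_sub_pow_div {x y : ℂ} (hx : ‖x‖ < 1) (hy : ‖y‖ < 1) :
    ∃ L, HasSum (fun k : ℕ => (x ^ k - y ^ k) / k) L ∧ exp L = (1 - y) / (1 - x) := by
  have one_sub_ne_zero {w : ℂ} (hw : ‖w‖ < 1) : 1 - w ≠ 0 :=
    sub_ne_zero.2 fun h => by simp [← h] at hw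
  refine ⟨-log (1 - x) - -log (1 - y), ?_, ?_⟩
  · simpa only [sub_div] using
      (hasSum_taylorSeries_neg_log hx).sub (hasSum_taylorSeries_neg_log hy)
  · rw [neg_sub_neg, exp_sub, exp_log (one_sub_ne_zero hy), exp_log (one_sub_ne_zero hx)]

theorem exp_mul_natCast_mul_I (θ : ℝ) (k : ℕ) : exp (θ * k * I) = exp (θ * I) ^ k := by
  rw [← exp_nat_mul]; ring_nf

theorem exp_mul_neg_add_one_mul_I (θ : ℝ) (k : ℕ) :
    exp (θ * (-(k + 1) : ℤ) * I) = (exp (θ * I))⁻¹ ^ (k + 1) := by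
  rw [← exp_neg, ← exp_nat_mul]; push_cast; ring_nf

theorem exists_hasSum_quasiLevyOfRoot_of_norm_lt_one (θ : ℝ) {z : ℂ} (hz : ‖z‖ < 1) :
    ∃ L, HasSum (fun m : ℤ => (exp (θ * m * I) - 1) * quasiLevyOfRoot z m) L ∧
      exp (I * θ + L) = (exp (θ * I) - z) / (1 - z) := by
  have hzu : ‖z * (exp (θ * I))⁻¹‖ < 1 := by
    rwa [norm_mul, norm_inv, norm_exp_ofReal_mul_I, inv_one, mul_one]
  obtain ⟨L, hL, hexp⟩ := exists_hasSum_pow_sub_pow_div hz hzu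
  refine ⟨0 + L, HasSum.of_nat_of_neg_add_one ?_ ?_, ?_⟩
  · simp only [quasiLevyOfRoot_natCast, if_neg (not_lt.2 hz.le), mul_zero]
    exact hasSum_zero
  · rw [← hasSum_nat_add_iff' 1] at hL
    refine (by simpa using hL : HasSum _ L).congr_fun fun k => ?_
    rw [quasiLevyOfRoot_neg_add_one, if_pos hz, exp_mul_neg_add_one_mul_I]
    ring
  · have hz1 : 1 - z ≠ 0 := sub_ne_zero.2 fun h => by simp [← h] at hz
    rw [zero_add, exp_add, hexp, mul_comm I]
    field_simp [exp_ne_zero]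

theorem exists_hasSum_quasiLevyOfRoot_of_one_lt_norm (θ : ℝ) {z : ℂ} (hz : 1 < ‖z‖) :
    ∃ L, HasSum (fun m : ℤ => (exp (θ * m * I) - 1) * quasiLevyOfRoot z m) L ∧
      exp L = (exp (θ * I) - z) / (1 - z) := by
  have hz' : ‖z⁻¹‖ < 1 := by simpa using inv_lt_one_of_one_lt₀ hz
  have hzu : ‖z⁻¹ * exp (θ * I)‖ < 1 := by rwa [norm_mul, norm_exp_ofReal_mul_I, mul_one]
  obtain ⟨L, hL, hexp⟩ := exists_hasSum_pow_sub_pow_div hz' hzu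
  refine ⟨L + 0, HasSum.of_nat_of_neg_add_one ?_ ?_, ?_⟩
  · refine hL.congr_fun fun k => ?_
    rw [quasiLevyOfRoot_natCast, if_pos hz, Int.cast_natCast, exp_mul_natCast_mul_I]
    ring
  · simp only [quasiLevyOfRoot_neg_add_one, if_neg (not_lt.2 hz.le), mul_zero]
    exact hasSum_zero
  · have hz0 : z ≠ 0 := norm_pos_iff.1 (one_pos.trans hz)
    have hz1 : z ≠ 1 := by rintro rfl; simp at hz
    have hz1' : 1 - z ≠ 0 := sub_ne_zero.2 hz1.symm
    rw [add_zero, hexp, div_eq_div_iff (by simpa [field, sub_eq_zero] using hz1) hz1']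
    field_simp
    ring

theorem exists_hasSum_quasiLevyOfRoot (θ : ℝ) {z : ℂ} (hz : ‖z‖ ≠ 1) :
    ∃ L, HasSum (fun m : ℤ => (exp (θ * m * I) - 1) * quasiLevyOfRoot z m) L ∧
      exp ((if ‖z‖ < 1 then I * θ else 0) + L) = (exp (θ * I) - z) / (1 - z) := by
  rcases hz.lt_or_gt with hz | hz
  · simpa only [if_pos hz] using exists_hasSum_quasiLevyOfRoot_of_norm_lt_one θ hz
  · simpa only [if_neg (not_lt.2 hz.le), zero_add] using
      exists_hasSum_quasiLevyOfRoot_of_one_lt_norm θ hz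

theorem quasiLevy_of_roots_representation_general (n : ℕ) (a : Fin (n + 1) → ℝ)
    (hsum : ∑ j, a j = 1) (ξ : Fin n → ℂ)
    (hfact : ∀ w : ℂ, ∑ j, (a j : ℂ) * w ^ (j : ℕ) =
      (a (Fin.last n) : ℂ) * ∏ j : Fin n, (w - ξ j))
    (hcirc : ∀ j, ‖ξ j‖ ≠ 1) :
    (∀ m : ℤ, (quasiLevyOfRoots n ξ m).im = 0) ∧
    Summable (fun m : ℤ => ‖quasiLevyOfRoots n ξ m‖) ∧
    (∀ θ : ℝ,
      ∑ j, (a j : ℂ) * Complex.exp (θ * (j : ℕ) * Complex.I) =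
        Complex.exp (Complex.I * θ *
            ((@Finset.filter (Fin n) (fun j => ‖ξ j‖ < 1) (Classical.decPred _)
              Finset.univ).card : ℕ) +
          ∑' m : ℤ, (Complex.exp (θ * (m : ℤ) * Complex.I) - 1) * quasiLevyOfRoots n ξ m)) := by
  have hone : (a (Fin.last n) : ℂ) * ∏ j, (1 - ξ j) = 1 := by
    rw [← hfact]; simpa using congrArg ((↑) : ℝ → ℂ) hsum
  have hconj := map_conj_eq_of_forall_sum_eq_mul_prod a
    (ofReal_ne_zero.1 (left_ne_zero_of_mul_eq_one hone)) ξ hfact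
  refine ⟨fun m => conj_eq_iff_im.1 (conj_quasiLevyOfRoots hconj m),
    summable_norm_quasiLevyOfRoots n ξ, fun θ => ?_⟩
  choose L hL hexp using fun j => exists_hasSum_quasiLevyOfRoot θ (hcirc j)
  have htsum : ∑' m : ℤ, (exp (θ * m * I) - 1) * quasiLevyOfRoots n ξ m = ∑ j, L j := by
    simp only [quasiLevyOfRoots_apply, mul_sum]
    exact (hasSum_sum fun j _ => hL j).tsum_eq
  have hcard :
      I * θ * ((@filter _ (fun j => ‖ξ j‖ < 1) (Classical.decPred _) univ).card : ℂ) =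
        ∑ j, if ‖ξ j‖ < 1 then I * θ else 0 := by
    rw [sum_ite, sum_const_zero, add_zero, sum_const, nsmul_eq_mul, mul_comm]
  calc ∑ j, (a j : ℂ) * exp (θ * (j : ℕ) * I)
      = a (Fin.last n) * ∏ j, (exp (θ * I) - ξ j) := by
        simp only [← hfact, exp_mul_natCast_mul_I]
    _ = ∏ j, (exp (θ * I) - ξ j) / (1 - ξ j) := by
        rw [prod_div_distrib, eq_div_iff (right_ne_zero_of_mul_eq_one hone), mul_right_comm, hone,
          one_mul]
    _ = _ := by
        rw [htsum, hcard, ← sum_add_distrib, exp_sum]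
        exact prod_congr rfl fun j _ => (hexp j).symm

/-- Let `ξ₁,…,ξ_n` be the roots (with multiplicity) of `f(w) = ∑_{j=0}^n a_j w^j` with real
coefficients `a_0,…,a_{n-1} ≥ 0`, `a_n > 0`, `∑ a_j = 1`, none of them on the unit circle.
Then the quasi-Lévy measure built from the roots is a real-valued finite signed measure on
`ℤ ∖ {0}`, and `f(e^{iθ}) = exp(iθγ + ∑_m (e^{iθm} − 1) ν(m))` where `γ` is the number of
roots with modulus less than `1`. -/
theorem quasiLevy_of_roots_representation (n : ℕ) (a : Fin (n + 1) → ℝ)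
    (ha : ∀ j : Fin (n + 1), (j : ℕ) < n → 0 ≤ a j) (han : 0 < a (Fin.last n))
    (hsum : ∑ j, a j = 1) (ξ : Fin n → ℂ)
    (hfact : ∀ w : ℂ, ∑ j, (a j : ℂ) * w ^ (j : ℕ) =
      (a (Fin.last n) : ℂ) * ∏ j : Fin n, (w - ξ j))
    (hcirc : ∀ j, ‖ξ j‖ ≠ 1) :
    (∀ m : ℤ, (quasiLevyOfRoots n ξ m).im = 0) ∧
    Summable (fun m : ℤ => ‖quasiLevyOfRoots n ξ m‖) ∧
    (∀ θ : ℝ,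
      ∑ j, (a j : ℂ) * Complex.exp (θ * (j : ℕ) * Complex.I) =
        Complex.exp (Complex.I * θ *
            ((@Finset.filter (Fin n) (fun j => ‖ξ j‖ < 1) (Classical.decPred _)
              Finset.univ).card : ℕ) +
          ∑' m : ℤ, (Complex.exp (θ * (m : ℤ) * Complex.I) - 1) * quasiLevyOfRoots n ξ m)) :=
  quasiLevy_of_roots_representation_general n a hsum ξ hfact hcirc
end

section
/- Let X be a random variable taking values in {0,1,...,N} with ℙ(X = j) = a_j > 0 for all j, and suppose the characteristic function of X has zeros. Let ξ₁,...,ξ_N be the complex roots of f(w) = Σ_{j=0}^N a_j w^j. Then for all sufficiently small h > 0, the shifted polynomial f_h(w) = a_N ∏_{j=1}^N (w − ξ_j − h) has real coefficients a_{h,j} which are strictly positive, f_h has no roots on the unit circle, and the random variables X_h with distribution (Σ_j a_{h,j})^{-1} Σ_j a_{h,j} δ_j converge in distribution to X as h → 0. -/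
open Complex Filter Set Polynomial Topology

/-!
Shifting every root by `h` turns `f` into `w ↦ f(w - h)`, whose coefficients are polynomials
in `h` that reduce to the `a_j > 0` at `h = 0`; continuity gives their positivity for small `h`
and the convergence of the normalized weights. For a fixed root `ξ`, `‖ξ + h‖ = 1` is a
nontrivial quadratic equation in `h`, so it fails for all small `h ≠ 0`.
-/

theorem finite_setOf_norm_add_ofReal_eq_one (z : ℂ) : {t : ℝ | ‖z + t‖ = 1}.Finite := by
  let q : ℝ[X] := X ^ 2 + C (2 * z.re) * X + C (normSq z - 1)
  have hq : q ≠ 0 := fun hq => by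
    simpa [q, coeff_X, coeff_C, coeff_one] using congrArg (coeff · 2) hq
  refine (finite_setOfPred_isRoot hq).subset fun t ht => ?_
  have : normSq (z + t) = 1 := by rw [← Complex.sq_norm, ht, one_pow]
  simp only [normSq_apply, add_re, ofReal_re, add_im, ofReal_im, add_zero] at this
  simp only [q, mem_ofPred_eq, IsRoot, eval_add, eval_mul, eval_pow, eval_C, eval_X, normSq_apply]
  linarith

theorem eventually_norm_add_ofReal_ne_one (z : ℂ) : ∀ᶠ t : ℝ in 𝓝[≠] 0, ‖z + t‖ ≠ 1 :=
  nhdsNE_le_cofinite 0 (finite_setOf_norm_add_ofReal_eq_one z).compl_mem_cofinite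

section ShiftedCoeff

variable {R : Type*} [CommRing R] {N : ℕ}

/-- The coefficients `a_{h,k}` of `f(w - h)`, where `f = ∑ a_j X^j`. -/
noncomputable def shiftedCoeff (a : Fin (N + 1) → R) (h : R) (k : Fin (N + 1)) : R :=
  (taylor (-h) (∑ j, C (a j) * X ^ (j : ℕ))).coeff k

theorem shiftedCoeff_zero (a : Fin (N + 1) → R) : shiftedCoeff a 0 = a := by
  ext k
  simp [shiftedCoeff, Fin.val_inj]

theorem continuous_shiftedCoeff [TopologicalSpace R] [IsTopologicalRing R]
    (a : Fin (N + 1) → R) (k : Fin (N + 1)) : Continuous fun h => shiftedCoeff a h k := by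
  simp only [shiftedCoeff, taylor_coeff]
  exact (Polynomial.continuous _).comp continuous_neg

theorem sum_shiftedCoeff_mul_pow {S : Type*} [CommRing S] (f : R →+* S)
    (a : Fin (N + 1) → R) (h : R) (w : S) :
    ∑ k, f (shiftedCoeff a h k) * w ^ (k : ℕ) = ∑ j, f (a j) * (w - f h) ^ (j : ℕ) := by
  set p : R[X] := ∑ j, C (a j) * X ^ (j : ℕ)
  have hdeg : (taylor (-h) p).natDegree < N + 1 := by
    rw [natDegree_taylor, Nat.lt_succ_iff]
    exact natDegree_sum_le_of_forall_le _ _ fun j _ =>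
      (natDegree_C_mul_X_pow_le _ _).trans (Nat.lt_succ_iff.mp j.isLt)
  calc ∑ k, f (shiftedCoeff a h k) * w ^ (k : ℕ)
      = eval₂ f w (taylor (-h) p) := by
        rw [eval₂_eq_sum_range' f hdeg, ← Fin.sum_univ_eq_sum_range]; rfl
    _ = eval₂ f (w - f h) p := by
        rw [taylor_apply, eval₂_comp]; simp [sub_eq_add_neg]
    _ = ∑ j, f (a j) * (w - f h) ^ (j : ℕ) := by simp [p, eval₂_finsetSum]

end ShiftedCoeff

theorem tendsto_sum_normalized_mul {α ι : Type*} [Fintype ι] {l : Filter α}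
    {c : α → ι → ℝ} {a : ι → ℝ} (hc : ∀ i, Tendsto (c · i) l (𝓝 (a i))) (ha : ∑ i, a i ≠ 0)
    (v : ι → ℝ) :
    Tendsto (fun x => ∑ j, ((∑ i, c x i)⁻¹ * c x j) * v j) l
      (𝓝 (∑ j, ((∑ i, a i)⁻¹ * a j) * v j)) :=
  tendsto_finsetSum _ fun j _ =>
    (((tendsto_finsetSum _ fun i _ => hc i).inv₀ ha).mul (hc j)).mul_const _

theorem shifted_roots_approximation_general (N : ℕ) (a : Fin (N + 1) → ℝ)
    (hapos : ∀ j, 0 < a j) (hsum : ∑ j, a j = 1)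
    (ξ : Fin N → ℂ)
    (hfact : ∀ w : ℂ, ∑ j, (a j : ℂ) * w ^ (j : ℕ) =
      (a (Fin.last N) : ℂ) * ∏ j : Fin N, (w - ξ j)) :
    ∃ h₀ : ℝ, 0 < h₀ ∧ ∃ ah : ℝ → Fin (N + 1) → ℝ,
      (∀ h ∈ Set.Ioo (0 : ℝ) h₀,
        -- `f_h` has real coefficients `a_{h,j}`
        (∀ w : ℂ, (a (Fin.last N) : ℂ) * ∏ j : Fin N, (w - ξ j - (h : ℂ)) =
          ∑ j, (ah h j : ℂ) * w ^ (j : ℕ)) ∧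
        -- the coefficients are strictly positive
        (∀ j, 0 < ah h j) ∧
        -- `f_h` has no roots on the unit circle
        (∀ w : ℂ, ‖w‖ = 1 →
          (a (Fin.last N) : ℂ) * ∏ j : Fin N, (w - ξ j - (h : ℂ)) ≠ 0)) ∧
      -- `X_h → X` in distribution as `h → 0⁺`
      (∀ g : BoundedContinuousFunction ℝ ℝ,
        Tendsto (fun h : ℝ => ∑ j, ((∑ i, ah h i)⁻¹ * ah h j) * g ((j : ℕ) : ℝ))
          (nhdsWithin 0 (Set.Ioi 0)) (nhds (∑ j, a j * g ((j : ℕ) : ℝ)))) := by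
  have hfact_shift (h : ℝ) (w : ℂ) : (a (Fin.last N) : ℂ) * ∏ j, (w - ξ j - h) =
      ∑ j, ((shiftedCoeff a h j : ℝ) : ℂ) * w ^ (j : ℕ) := by
    have := sum_shiftedCoeff_mul_pow Complex.ofRealHom a h w
    simp only [ofRealHom_eq_coe, hfact, sub_right_comm] at this
    exact this.symm
  have hlim (k : Fin (N + 1)) : Tendsto (shiftedCoeff a · k) (𝓝[>] 0) (𝓝 (a k)) := by
    simpa [shiftedCoeff_zero] using
      ((continuous_shiftedCoeff a k).tendsto 0).mono_left nhdsWithin_le_nhds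
  have hpos : ∀ᶠ h in 𝓝[>] 0, ∀ k, 0 < shiftedCoeff a h k :=
    eventually_all.2 fun k => (hlim k).eventually_const_lt (hapos k)
  have hcirc : ∀ᶠ h : ℝ in 𝓝[>] 0, ∀ j, ‖ξ j + h‖ ≠ 1 :=
    eventually_all.2 fun j => nhdsGT_le_nhdsNE 0 (eventually_norm_add_ofReal_ne_one (ξ j))
  obtain ⟨h₀, hh₀, hsub⟩ := mem_nhdsGT_iff_exists_Ioo_subset.mp (hpos.and hcirc)
  refine ⟨h₀, hh₀, shiftedCoeff a, fun h hh => ⟨hfact_shift h, (hsub hh).1, fun w hw => ?_⟩,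
    fun g => by simpa [hsum] using tendsto_sum_normalized_mul hlim (by simp [hsum]) _⟩
  refine mul_ne_zero (ofReal_ne_zero.2 (hapos _).ne') (Finset.prod_ne_zero_iff.2 fun j _ hj => ?_)
  exact (hsub hh).2 j (by rwa [show w = ξ j + h by linear_combination hj] at hw)

/-- Let `X` take values in `{0,…,N}` with `ℙ(X = j) = a_j > 0`, and suppose its
characteristic function has a zero. Let `ξ₁,…,ξ_N` be the roots of `f(w) = ∑ a_j w^j`.
Then for all small `h > 0`, the shifted polynomial `f_h(w) = a_N ∏ (w − ξ_j − h)` has real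
coefficients `a_{h,j} > 0`, has no roots on the unit circle, and the normalized
distributions `(∑ a_{h,j})⁻¹ ∑ a_{h,j} δ_j` converge in distribution to that of `X` as
`h → 0⁺`. -/
theorem shifted_roots_approximation (N : ℕ) (a : Fin (N + 1) → ℝ)
    (hapos : ∀ j, 0 < a j) (hsum : ∑ j, a j = 1)
    (hzero : ∃ θ : ℝ, ∑ j, (a j : ℂ) * Complex.exp (θ * (j : ℕ) * Complex.I) = 0)
    (ξ : Fin N → ℂ)
    (hfact : ∀ w : ℂ, ∑ j, (a j : ℂ) * w ^ (j : ℕ) =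
      (a (Fin.last N) : ℂ) * ∏ j : Fin N, (w - ξ j)) :
    ∃ h₀ : ℝ, 0 < h₀ ∧ ∃ ah : ℝ → Fin (N + 1) → ℝ,
      (∀ h ∈ Set.Ioo (0 : ℝ) h₀,
        -- `f_h` has real coefficients `a_{h,j}`
        (∀ w : ℂ, (a (Fin.last N) : ℂ) * ∏ j : Fin N, (w - ξ j - (h : ℂ)) =
          ∑ j, (ah h j : ℂ) * w ^ (j : ℕ)) ∧
        -- the coefficients are strictly positive
        (∀ j, 0 < ah h j) ∧
        -- `f_h` has no roots on the unit circle
        (∀ w : ℂ, ‖w‖ = 1 →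
          (a (Fin.last N) : ℂ) * ∏ j : Fin N, (w - ξ j - (h : ℂ)) ≠ 0)) ∧
      -- `X_h → X` in distribution as `h → 0⁺`
      (∀ g : BoundedContinuousFunction ℝ ℝ,
        Tendsto (fun h : ℝ => ∑ j, ((∑ i, ah h i)⁻¹ * ah h j) * g ((j : ℕ) : ℝ))
          (nhdsWithin 0 (Set.Ioi 0)) (nhds (∑ j, a j * g ((j : ℕ) : ℝ)))) :=
  shifted_roots_approximation_general N a hapos hsum ξ hfact
end
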